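/- Suppose 0 < β < 1/(2N+1). Let t = (t_0, t_1, …, t_m) ∈ T^{m+1} with 0 = t_0 < t_1 < … < t_m, and let g(x) = r x + b with 0 < r < 1. If g(Γ_t) ⊆ Γ, then g = φ_i for some word i ∈ Ω_t^n with n ≥ τ_t. -/

import Mathlib

noncomputable section

namespace HSCantor

/-- A `D`-coding of `x`: a digit sequence `c` with digits in `D ⊆ ℤ` such that
`x = (1-β)/N · Σ_{k=1}^∞ c_k β^{k-1}` (here indexed from `k = 0`). -/
def IsCoding (N : ℕ) (β : ℝ) (D : Set ℤ) (x : ℝ) (c : ℕ → ℤ) : Prop :=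
  (∀ k, c k ∈ D) ∧ x = (1 - β) / N * ∑' k : ℕ, (c k : ℝ) * β ^ k

/-- The set `Γ_{β,D}` for a digit set `D ⊆ ℤ`. -/
def cantorD (N : ℕ) (β : ℝ) (D : Set ℤ) : Set ℝ := { x | ∃ c, IsCoding N β D x c }

/-- The homogeneous symmetric Cantor set `Γ = Γ_{β,{0,1,…,N}}`. -/
def Gamma (N : ℕ) (β : ℝ) : Set ℝ := cantorD N β (Set.Icc 0 (N : ℤ))

/-- `E ⊆ ℝ` is a self-similar set: it is nonempty, compact, and is the union of its
images under finitely many contracting similitudes `x ↦ r x + b`, `0 < |r| < 1`. -/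
def IsSelfSimilar (E : Set ℝ) : Prop :=
  E.Nonempty ∧ IsCompact E ∧ ∃ F : Finset (ℝ × ℝ),
    (∀ p ∈ F, 0 < |p.1| ∧ |p.1| < 1) ∧
    E = ⋃ p ∈ F, (fun x => p.1 * x + p.2) '' E

/-- `Γ_t = ⋃_{j=0}^m (Γ + t_j)`. -/
def GammaT (N : ℕ) (β : ℝ) {m : ℕ} (t : Fin (m + 1) → ℝ) : Set ℝ :=
  ⋃ j, (fun x => x + t j) '' Gamma N β

/-- The set `T = ⋃_{n≥1} { (1-β)/N · Σ_{k=1}^n j_k β^{-k} : j_k ∈ {0,…,N} }`. -/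
def Tset (N : ℕ) (β : ℝ) : Set ℝ :=
  { x | ∃ n : ℕ, 1 ≤ n ∧ ∃ c : ℕ → ℕ, (∀ k, c k ≤ N) ∧
      x = (1 - β) / N * ∑ k ∈ Finset.Icc 1 n, (c k : ℝ) * β ^ (-(k : ℤ)) }

/-- `d` is a digit representation of the translation vector `t` with `τ` digits:
`t_j = (1-β)/N · Σ_{k=1}^τ d_{j,k} β^{-k}` with all digits in `{0,…,N}`. -/
def IsDigitRep (N : ℕ) (β : ℝ) {m : ℕ} (t : Fin (m + 1) → ℝ) (τ : ℕ)
    (d : Fin (m + 1) → ℕ → ℕ) : Prop :=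
  (∀ j k, d j k ≤ N) ∧
    ∀ j, t j = (1 - β) / N * ∑ k ∈ Finset.Icc 1 τ, (d j k : ℝ) * β ^ (-(k : ℤ))

/-- `d` is a digit representation of `t` with `τ = τ_t` digits, `τ_t` minimal. -/
def IsMinimalRep (N : ℕ) (β : ℝ) {m : ℕ} (t : Fin (m + 1) → ℝ) (τ : ℕ)
    (d : Fin (m + 1) → ℕ → ℕ) : Prop :=
  IsDigitRep N β t τ d ∧ ∀ τ' < τ, ∀ d', ¬ IsDigitRep N β t τ' d'

/-- `s_k = max_{0 ≤ j ≤ m} t_{j,k}`. -/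
def digitSup {m : ℕ} (d : Fin (m + 1) → ℕ → ℕ) (k : ℕ) : ℕ :=
  Finset.univ.sup fun j => d j k

/-- Words of length `n` over the alphabet `{0,1,…,N}`, as lists of naturals. -/
def Words (N n : ℕ) : Set (List ℕ) := { w | w.length = n ∧ ∀ x ∈ w, x ≤ N }

/-- `Ω_t^n`: words `i_1 … i_n ∈ {0,…,N}^n` with `i_{n+1-k} ≤ N - s_k` for `1 ≤ k ≤ τ`.
(A list `w = [i_1, …, i_n]` satisfies `i_{n+1-k} = w.getD (n-k) 0`.) -/
def Omega (N τ : ℕ) (s : ℕ → ℕ) (n : ℕ) : Set (List ℕ) :=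
  { w | w ∈ Words N n ∧ ∀ k, 1 ≤ k → k ≤ τ → w.getD (n - k) 0 + s k ≤ N }

/-- `Ω̂_t^n`: words `i_1 … i_n ∈ {0,…,N}^n` with `i_{n+1-k} ≥ s_k` for `1 ≤ k ≤ τ`. -/
def OmegaHat (N τ : ℕ) (s : ℕ → ℕ) (n : ℕ) : Set (List ℕ) :=
  { w | w ∈ Words N n ∧ ∀ k, 1 ≤ k → k ≤ τ → s k ≤ w.getD (n - k) 0 }

/-- `W_t^τ = A_t^τ ∪ Â_t^τ`: words obtained from a word in `Ω_t^τ` (resp. `Ω̂_t^τ`)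
by adding (resp. subtracting) the digits of some `t_j` to the last `τ` positions. -/
def Wset (N : ℕ) {m : ℕ} (τ : ℕ) (d : Fin (m + 1) → ℕ → ℕ) : Set (List ℕ) :=
  { v | ∃ w ∈ Omega N τ (digitSup d) τ, ∃ j : Fin (m + 1),
      v = List.ofFn fun idx : Fin τ => w.getD idx 0 + d j (τ - (idx : ℕ)) } ∪
  { v | ∃ w ∈ OmegaHat N τ (digitSup d) τ, ∃ j : Fin (m + 1),
      v = List.ofFn fun idx : Fin τ => w.getD idx 0 - d j (τ - (idx : ℕ)) }

/-- The symbolic admissibility condition: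
`⋃_{n=τ}^ℓ {0,…,N}^{n-τ} × W_t^τ × {0,…,N}^{ℓ-n} = {0,…,N}^ℓ` for some `ℓ ≥ τ`. -/
def AdmissibleWith (N : ℕ) {m : ℕ} (τ : ℕ) (d : Fin (m + 1) → ℕ → ℕ) : Prop :=
  ∃ ℓ, τ ≤ ℓ ∧
    (⋃ n ∈ Finset.Icc τ ℓ,
      { z : List ℕ | ∃ u ∈ Words N (n - τ), ∃ w ∈ Wset N τ d, ∃ v ∈ Words N (ℓ - n),
          z = u ++ w ++ v }) = Words N ℓ

/-- `t` is an admissible translation vector. -/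
def IsAdmissible (N : ℕ) (β : ℝ) {m : ℕ} (t : Fin (m + 1) → ℝ) : Prop :=
  (∀ j, t j ∈ Tset N β) ∧
    ∃ τ d, IsMinimalRep N β t τ d ∧ AdmissibleWith N τ d

/-- The vertex set `V_t = {0,…,N}^τ \ W_t^τ` of the directed graph `G_t`. -/
def Vset (N : ℕ) {m : ℕ} (τ : ℕ) (d : Fin (m + 1) → ℕ → ℕ) : Set (List ℕ) :=
  Words N τ \ Wset N τ d

/-- The graph on `V` with an edge `i → j` iff `i_2 … i_τ = j_1 … j_{τ-1}` has a cycle: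
a directed path of positive length starting and ending at the same vertex. -/
def HasCycle (V : Set (List ℕ)) : Prop :=
  ∃ (L : ℕ) (p : ℕ → List ℕ), 0 < L ∧ (∀ i ≤ L, p i ∈ V) ∧
    (∀ i < L, (p i).drop 1 = (p (i + 1)).dropLast) ∧ p 0 = p L

open Classical in
/-- The adjacency matrix of the directed graph `G_t`, indexed by all words of length `τ`
over `{0,…,N}`; its `(i,j)` entry is `1` exactly when `i, j ∈ V_t` and there is a
directed edge `i → j`, and the rows and columns outside `V_t` are zero. -/
def adjMat (N τ : ℕ) (V : Set (List ℕ)) :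
    Matrix (Fin τ → Fin (N + 1)) (Fin τ → Fin (N + 1)) ℕ :=
  fun i j =>
    if (List.ofFn fun k => (i k : ℕ)) ∈ V ∧ (List.ofFn fun k => (j k : ℕ)) ∈ V ∧
        (List.ofFn fun k => (i k : ℕ)).drop 1 = (List.ofFn fun k => (j k : ℕ)).dropLast
    then 1 else 0

/-- `φ_i(x) = βx + i(1-β)/N`. -/
def phi (N : ℕ) (β : ℝ) (i : ℕ) (x : ℝ) : ℝ := β * x + i * (1 - β) / N

/-- `φ_{i_1 … i_n} = φ_{i_1} ∘ ⋯ ∘ φ_{i_n}`. -/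
def phiWord (N : ℕ) (β : ℝ) (w : List ℕ) (x : ℝ) : ℝ := w.foldr (phi N β) x

/-- The conjugate translation vector `t̂_j = t_m - t_{m-j}`. -/
def conj {m : ℕ} (t : Fin (m + 1) → ℝ) : Fin (m + 1) → ℝ :=
  fun j => t (Fin.last m) - t ⟨m - (j : ℕ), Nat.lt_succ_of_le (Nat.sub_le m j)⟩

section Aux
variable {N : ℕ} {β : ℝ}

lemma beta_lt_one (hN : 0 < N) (hβ0 : 0 < β) (hβ1 : β < 1 / (2 * N + 1)) : β < 1 := by
  have h1 : (1:ℝ) ≤ 2 * N + 1 := by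
    have : (0:ℝ) ≤ (N:ℝ) := Nat.cast_nonneg N
    linarith
  calc β < 1 / (2 * N + 1) := hβ1
    _ ≤ 1 := by rw [div_le_one (by positivity)]; exact h1

lemma key_ineq (hN : 0 < N) (hβ0 : 0 < β) (hβ1 : β < 1 / (2 * N + 1)) :
    2 * N * β < 1 - β := by
  have h2 : (0:ℝ) < 2 * N + 1 := by positivity
  have := (lt_div_iff₀ h2).1 hβ1
  nlinarith

lemma two_beta_lt (hN : 0 < N) (hβ0 : 0 < β) (hβ1 : β < 1 / (2 * N + 1)) :
    2 * β < (1 - β) / N := by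
  have hN' : (0:ℝ) < N := by exact_mod_cast hN
  rw [lt_div_iff₀ hN']
  have := key_ineq hN hβ0 hβ1
  nlinarith [hN'.le, hβ0.le, (by exact_mod_cast hN : (1:ℝ) ≤ N)]

lemma summable_digits (hβ0 : 0 < β) (hβ1 : β < 1) (c : ℕ → ℝ) (C : ℝ)
    (hC : ∀ k, |c k| ≤ C) : Summable (fun k => c k * β ^ k) := by
  apply Summable.of_norm_bounded (g := fun k => C * β ^ k)
    ((summable_geometric_of_lt_one hβ0.le hβ1).mul_left C)
  intro k
  rw [Real.norm_eq_abs, abs_mul, abs_pow, abs_of_pos hβ0]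
  exact mul_le_mul_of_nonneg_right (hC k) (pow_nonneg hβ0.le k)

lemma tsum_digits_le (hβ0 : 0 < β) (hβ1 : β < 1) (c : ℕ → ℝ) (C : ℝ)
    (hC : ∀ k, |c k| ≤ C) : |∑' k : ℕ, c k * β ^ k| ≤ C / (1 - β) := by
  have h1 : Summable (fun k : ℕ => ‖c k * β ^ k‖) := by
    apply Summable.congr (summable_digits hβ0 hβ1 (fun k => |c k|) C (by simpa using hC))
    intro k
    rw [Real.norm_eq_abs, abs_mul, abs_pow, abs_of_pos hβ0]
  calc |∑' k : ℕ, c k * β ^ k| ≤ ∑' k : ℕ, ‖c k * β ^ k‖ := norm_tsum_le_tsum_norm h1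
    _ ≤ ∑' k : ℕ, C * β ^ k := by
        apply Summable.tsum_le_tsum _ h1 ((summable_geometric_of_lt_one hβ0.le hβ1).mul_left C)
        intro k
        rw [Real.norm_eq_abs, abs_mul, abs_pow, abs_of_pos hβ0]
        exact mul_le_mul_of_nonneg_right (hC k) (pow_nonneg hβ0.le k)
    _ = C / (1 - β) := by
        rw [tsum_mul_left, tsum_geometric_of_lt_one hβ0.le hβ1, div_eq_mul_inv]


lemma summable_coding (hβ0 : 0 < β) (hβ1 : β < 1) (c : ℕ → ℤ)
    (hc : ∀ k, c k ∈ Set.Icc 0 (N:ℤ)) : Summable (fun k : ℕ => (c k : ℝ) * β ^ k) := by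
  apply summable_digits hβ0 hβ1 _ (N:ℝ)
  intro k
  obtain ⟨h1, h2⟩ := hc k
  rw [abs_of_nonneg (by exact_mod_cast h1)]
  exact_mod_cast h2

lemma zero_mem_Gamma : (0:ℝ) ∈ Gamma N β := by
  refine ⟨fun _ => 0, fun k => ⟨le_refl 0, by positivity⟩, ?_⟩
  simp

lemma one_mem_Gamma (hN : 0 < N) (hβ0 : 0 < β) (hβ1 : β < 1) : (1:ℝ) ∈ Gamma N β := by
  refine ⟨fun _ => (N:ℤ), fun k => ⟨by positivity, le_refl _⟩, ?_⟩
  push_cast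
  rw [tsum_mul_left, tsum_geometric_of_lt_one hβ0.le hβ1]
  have hN' : (0:ℝ) < N := by exact_mod_cast hN
  have hb : (1:ℝ) - β ≠ 0 := by linarith
  field_simp

lemma Gamma_subset (hN : 0 < N) (hβ0 : 0 < β) (hβ1 : β < 1) :
    Gamma N β ⊆ Set.Icc (0:ℝ) 1 := by
  rintro x ⟨c, hc, rfl⟩
  have hN' : (0:ℝ) < N := by exact_mod_cast hN
  have hd : (0:ℝ) < (1 - β) / N := by
    apply div_pos (by linarith) hN'
  have hs := summable_coding (N := N) hβ0 hβ1 c hc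
  constructor
  · apply mul_nonneg hd.le
    apply tsum_nonneg
    intro k
    have := (hc k).1
    positivity
  · have hle : ∑' k : ℕ, (c k : ℝ) * β ^ k ≤ ∑' k : ℕ, (N:ℝ) * β ^ k := by
      apply Summable.tsum_le_tsum _ hs ((summable_geometric_of_lt_one hβ0.le hβ1).mul_left _)
      intro k
      apply mul_le_mul_of_nonneg_right _ (pow_nonneg hβ0.le k)
      exact_mod_cast (hc k).2
    rw [tsum_mul_left, tsum_geometric_of_lt_one hβ0.le hβ1] at hle
    calc (1 - β) / N * ∑' k : ℕ, (c k : ℝ) * β ^ k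
        ≤ (1 - β) / N * ((N:ℝ) * (1 - β)⁻¹) := by
          exact mul_le_mul_of_nonneg_left hle hd.le
      _ = 1 := by
          have hb : (1:ℝ) - β ≠ 0 := by linarith
          field_simp

/-- Peel off the first digit of a coding. -/
lemma Gamma_decomp (hβ0 : 0 < β) (hβ1 : β < 1) {x : ℝ} (hx : x ∈ Gamma N β) :
    ∃ i ≤ N, ∃ y ∈ Gamma N β, x = phi N β i y := by
  obtain ⟨c, hc, rfl⟩ := hx
  refine ⟨(c 0).toNat, ?_, (1 - β) / N * ∑' k : ℕ, (c (k+1) : ℝ) * β ^ k,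
    ⟨fun k => c (k+1), fun k => hc (k+1), rfl⟩, ?_⟩
  · have := (hc 0).2
    omega
  · have hs := summable_coding (N := N) hβ0 hβ1 c hc
    have hsh : Summable (fun k : ℕ => (c (k+1) : ℝ) * β ^ (k+1)) := by
      exact_mod_cast (summable_nat_add_iff 1).2 hs
    rw [Summable.tsum_eq_zero_add hs]
    have h2 : ∑' k : ℕ, (c (k+1) : ℝ) * β ^ (k+1)
        = β * ∑' k : ℕ, (c (k+1) : ℝ) * β ^ k := by
      rw [← tsum_mul_left]
      congr 1
      funext k
      ring
    rw [h2, phi]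
    have h0 : ((c 0).toNat : ℝ) = (c 0 : ℝ) := by
      have := (hc 0).1
      exact_mod_cast Int.toNat_of_nonneg this
    rw [h0]
    ring

lemma phi_mem_Gamma (hβ0 : 0 < β) (hβ1 : β < 1) {i : ℕ} (hi : i ≤ N) {x : ℝ}
    (hx : x ∈ Gamma N β) : phi N β i x ∈ Gamma N β := by
  obtain ⟨c, hc, rfl⟩ := hx
  set cc : ℕ → ℤ := fun k => if k = 0 then (i:ℤ) else c (k-1) with hcc
  have hmem : ∀ k, cc k ∈ Set.Icc 0 (N:ℤ) := by
    intro k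
    cases k with
    | zero =>
        refine ⟨?_, ?_⟩ <;> simp only [hcc, if_pos rfl]
        · exact Int.ofNat_nonneg i
        · exact_mod_cast hi
    | succ k => simpa [hcc] using hc k
  refine ⟨cc, hmem, ?_⟩
  have hs : Summable (fun k : ℕ => (cc k : ℝ) * β ^ k) :=
    summable_coding hβ0 hβ1 cc hmem
  rw [Summable.tsum_eq_zero_add hs]
  have h2 : ∑' k : ℕ, (cc (k+1) : ℝ) * β ^ (k+1)
      = β * ∑' k : ℕ, (c k : ℝ) * β ^ k := by
    rw [← tsum_mul_left]
    congr 1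
    funext k
    simp only [hcc]
    norm_num
    ring
  rw [h2]
  simp only [hcc]
  norm_num [phi]
  ring


/-- If a function vanishes below `s`, its tsum equals the shifted tsum. -/
lemma tsum_shift {f : ℕ → ℝ} (s : ℕ) (hf : Summable f) (h0 : ∀ q < s, f q = 0) :
    ∑' q : ℕ, f q = ∑' q : ℕ, f (q + s) := by
  induction s generalizing f with
  | zero => simp
  | succ s ih =>
    have hf1 : Summable (fun q => f (q + 1)) := (summable_nat_add_iff 1).2 hf
    rw [Summable.tsum_eq_zero_add hf, h0 0 (Nat.succ_pos s), zero_add,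
      ih hf1 (fun q hq => h0 (q+1) (by omega))]
    exact tsum_congr fun q => by rw [Nat.add_assoc]


/-- Uniqueness of expansions: digits bounded by 2N, small β. -/
lemma expansion_unique (hN : 0 < N) (hβ0 : 0 < β) (hβ1 : β < 1 / (2 * N + 1)) :
    ∀ p : ℕ, ∀ e : ℕ → ℤ, (∀ q, |e q| ≤ 2 * N) →
      (∑' q : ℕ, (e q : ℝ) * β ^ q) = 0 → e p = 0 := by
  have hβ1' := beta_lt_one hN hβ0 hβ1
  have key : ∀ e : ℕ → ℤ, (∀ q, |e q| ≤ 2 * N) →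
      (∑' q : ℕ, (e q : ℝ) * β ^ q) = 0 →
      e 0 = 0 ∧ (∑' q : ℕ, (e (q+1) : ℝ) * β ^ q) = 0 := by
    intro e he hsum
    have hb : ∀ q, |(e q : ℝ)| ≤ 2 * N := by
      intro q
      exact_mod_cast he q
    have hs : Summable (fun q : ℕ => (e q : ℝ) * β ^ q) :=
      summable_digits hβ0 hβ1' _ _ hb
    have hs1 : Summable (fun q : ℕ => (e (q+1) : ℝ) * β ^ q) :=
      summable_digits hβ0 hβ1' _ _ (fun q => hb (q+1))
    have hshift : ∑' q : ℕ, (e (q+1) : ℝ) * β ^ (q+1)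
        = β * ∑' q : ℕ, (e (q+1) : ℝ) * β ^ q := by
      rw [← tsum_mul_left]; congr 1; funext q; ring
    have heq : (e 0 : ℝ) + β * ∑' q : ℕ, (e (q+1) : ℝ) * β ^ q = 0 := by
      rw [← hshift]
      simpa using (Summable.tsum_eq_zero_add hs).symm.trans hsum
    have htail : |∑' q : ℕ, (e (q+1) : ℝ) * β ^ q| ≤ 2 * N / (1 - β) :=
      tsum_digits_le hβ0 hβ1' _ _ (fun q => hb (q+1))
    have he0 : |(e 0 : ℝ)| < 1 := by
      have h1 : (e 0 : ℝ) = -(β * ∑' q : ℕ, (e (q+1) : ℝ) * β ^ q) := by linarith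
      rw [h1, abs_neg, abs_mul, abs_of_pos hβ0]
      have hk := key_ineq hN hβ0 hβ1
      have h1b : (0:ℝ) < 1 - β := by linarith
      calc β * |∑' q : ℕ, (e (q+1) : ℝ) * β ^ q| ≤ β * (2 * N / (1 - β)) :=
            mul_le_mul_of_nonneg_left htail hβ0.le
        _ < 1 := by
            rw [mul_div_assoc', div_lt_one h1b]
            nlinarith
    have he00 : e 0 = 0 := by
      have : |e 0| < 1 := by exact_mod_cast he0
      rw [abs_lt] at this
      omega
    refine ⟨he00, ?_⟩
    have : β * ∑' q : ℕ, (e (q+1) : ℝ) * β ^ q = 0 := by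
      rw [he00] at heq
      simpa using heq
    rcases mul_eq_zero.1 this with h | h
    · exact absurd h hβ0.ne'
    · exact h
  intro p
  induction p with
  | zero => intro e he hsum; exact (key e he hsum).1
  | succ p ih =>
    intro e he hsum
    exact ih (fun q => e (q+1)) (fun q => he (q+1)) (key e he hsum).2


lemma cyl_cover (hN : 0 < N) (hβ0 : 0 < β) (hβ1 : β < 1 / (2 * N + 1)) :
    ∀ i : ℕ, i ≤ N → ∀ x : ℝ, 0 ≤ x → x ≤ i * ((1-β)/N) + β →
    ∃ j : ℕ, j ≤ N ∧
      (((j:ℝ) * ((1-β)/N) ≤ x ∧ x ≤ (j:ℝ) * ((1-β)/N) + β) ∨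
       ((j:ℝ) * ((1-β)/N) + β ≤ x ∧ x ≤ ((j:ℝ)+1) * ((1-β)/N))) := by
  intro i
  induction i with
  | zero =>
    intro _ x hx0 hx1
    exact ⟨0, Nat.zero_le N, Or.inl ⟨by simpa using hx0, by simpa using hx1⟩⟩
  | succ i ih =>
    intro hi x hx0 hx1
    rcases le_or_gt x ((i:ℝ) * ((1-β)/N) + β) with hc | hc
    · exact ih (by omega) x hx0 hc
    rcases le_or_gt x (((i:ℝ)+1) * ((1-β)/N)) with hc2 | hc2
    · exact ⟨i, by omega, Or.inr ⟨hc.le, hc2⟩⟩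
    · refine ⟨i+1, hi, Or.inl ⟨?_, ?_⟩⟩
      · push_cast; linarith
      · push_cast; push_cast at hx1; linarith

lemma dense_below (hN : 0 < N) (hβ0 : 0 < β) (hβ1 : β < 1 / (2 * N + 1)) :
    ∀ k : ℕ, ∀ x : ℝ, 0 ≤ x → x ≤ 1 →
    ∃ γ ∈ Gamma N β, γ ≤ x ∧ x - γ ≤ max ((1-β)/N - β) (β ^ k) := by
  have hβ1' := beta_lt_one hN hβ0 hβ1
  have hN' : (0:ℝ) < N := by exact_mod_cast hN
  have hδ : 0 < (1-β)/N - β := by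
    have := two_beta_lt hN hβ0 hβ1
    linarith
  intro k
  induction k with
  | zero =>
    intro x hx0 hx1
    exact ⟨0, zero_mem_Gamma, hx0, by simpa using le_max_of_le_right hx1⟩
  | succ k ih =>
    intro x hx0 hx1
    have hx1' : x ≤ (N:ℝ) * ((1-β)/N) + β := by
      have : (N:ℝ) * ((1-β)/N) = 1 - β := by field_simp
      rw [this]; linarith
    obtain ⟨j, hj, hcase⟩ := cyl_cover hN hβ0 hβ1 N le_rfl x hx0 hx1'
    rcases hcase with ⟨h1, h2⟩ | ⟨h1, h2⟩
    · -- inside cylinder j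
      set y := (x - (j:ℝ) * ((1-β)/N)) / β with hy
      have hy0 : 0 ≤ y := by
        apply div_nonneg _ hβ0.le
        linarith
      have hy1 : y ≤ 1 := by
        rw [hy, div_le_one hβ0]
        linarith
      obtain ⟨γ', hγ'Γ, hγ'le, hγ'd⟩ := ih y hy0 hy1
      refine ⟨phi N β j γ', phi_mem_Gamma hβ0 hβ1' hj hγ'Γ, ?_, ?_⟩
      · have : phi N β j γ' = β * γ' + (j:ℝ) * (1-β) / N := rfl
        rw [this]
        have hxeq : x = β * y + (j:ℝ) * ((1-β)/N) := by
          rw [hy]; field_simp; ring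
        rw [hxeq]
        have := mul_le_mul_of_nonneg_left hγ'le hβ0.le
        ring_nf
        ring_nf at this ⊢
        nlinarith [hγ'le, hβ0.le]
      · have hxeq : x = β * y + (j:ℝ) * ((1-β)/N) := by
          rw [hy]; field_simp; ring
        have : x - phi N β j γ' = β * (y - γ') := by
          rw [hxeq, phi]; ring
        rw [this]
        have hb := mul_le_mul_of_nonneg_left hγ'd hβ0.le
        rcases max_choice ((1-β)/N - β) (β ^ k) with hm | hm
        · rw [hm] at hb
          calc β * (y - γ') ≤ β * ((1-β)/N - β) := hb
            _ ≤ (1-β)/N - β := by nlinarith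
            _ ≤ _ := le_max_left _ _
        · rw [hm] at hb
          calc β * (y - γ') ≤ β * β ^ k := hb
            _ = β ^ (k+1) := by ring
            _ ≤ _ := le_max_right _ _
    · -- in the gap to the right of cylinder j
      refine ⟨phi N β j 1, phi_mem_Gamma hβ0 hβ1' hj (one_mem_Gamma hN hβ0 hβ1'), ?_, ?_⟩
      · have : phi N β j 1 = β * 1 + (j:ℝ) * (1-β) / N := rfl
        rw [this]
        rw [mul_div_assoc] at *
        linarith
      · have : phi N β j 1 = β * 1 + (j:ℝ) * (1-β) / N := rfl
        rw [this]
        rw [mul_div_assoc] at *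
        have : x - (β * 1 + (j:ℝ) * ((1-β)/N)) ≤ (1-β)/N - β := by linarith
        exact le_trans this (le_max_left _ _)

lemma gap_empty (hN : 0 < N) (hβ0 : 0 < β) (hβ1' : β < 1) {i : ℕ} (hi : i ≤ N)
    {γ : ℝ} (hγ : γ ∈ Gamma N β) :
    γ ≤ (i:ℝ) * ((1-β)/N) + β ∨ ((i:ℝ)+1) * ((1-β)/N) ≤ γ := by
  obtain ⟨j, hj, y, hy, rfl⟩ := Gamma_decomp hβ0 hβ1' hγ
  obtain ⟨hy0, hy1⟩ := Gamma_subset hN hβ0 hβ1' hy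
  have hδ' : (0:ℝ) ≤ (1-β)/N := by
    apply div_nonneg (by linarith) (by positivity)
  have hphi : phi N β j y = β * y + (j:ℝ) * ((1-β)/N) := by
    rw [phi]; ring
  rcases le_or_gt (j:ℕ) i with hji | hji
  · left
    rw [hphi]
    have : (j:ℝ) ≤ (i:ℝ) := by exact_mod_cast hji
    nlinarith
  · right
    rw [hphi]
    have : (i:ℝ) + 1 ≤ (j:ℝ) := by exact_mod_cast hji
    nlinarith

set_option maxHeartbeats 1000000 in
lemma no_mid (hN : 0 < N) (hβ0 : 0 < β) (hβ1 : β < 1 / (2 * N + 1)) {r b : ℝ}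
    (hβr : β < r) (hr1 : r < 1)
    (h : ∀ x ∈ Gamma N β, r * x + b ∈ Gamma N β) : False := by
  have hβ1' := beta_lt_one hN hβ0 hβ1
  have hr0 : 0 < r := lt_trans hβ0 hβr
  have hN' : (0:ℝ) < N := by exact_mod_cast hN
  set δ' : ℝ := (1-β)/N with hδ'def
  have hδ : 0 < δ' - β := by
    have := two_beta_lt hN hβ0 hβ1
    rw [hδ'def]; linarith
  have hb : b ∈ Gamma N β := by
    have := h 0 zero_mem_Gamma
    simpa using this
  have hbr : r + b ∈ Gamma N β := by
    have := h 1 (one_mem_Gamma hN hβ0 hβ1')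
    simpa using this
  obtain ⟨i, hi, u, hu, hbu⟩ := Gamma_decomp hβ0 hβ1' hb
  obtain ⟨hu0, hu1⟩ := Gamma_subset hN hβ0 hβ1' hu
  obtain ⟨i', hi', v, hv, hbv⟩ := Gamma_decomp hβ0 hβ1' hbr
  obtain ⟨hv0, hv1⟩ := Gamma_subset hN hβ0 hβ1' hv
  have hbu' : (i:ℝ) * δ' ≤ b ∧ b ≤ (i:ℝ) * δ' + β := by
    rw [hbu, phi, mul_div_assoc, ← hδ'def]
    constructor <;> nlinarith
  have hbv' : (i':ℝ) * δ' ≤ r + b ∧ r + b ≤ (i':ℝ) * δ' + β := by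
    rw [hbv, phi, mul_div_assoc, ← hδ'def]
    constructor <;> nlinarith
  have hii' : i < i' := by
    by_contra hcon
    push_neg at hcon
    have : (i':ℝ) ≤ (i:ℝ) := by exact_mod_cast hcon
    have hδ'0 : (0:ℝ) ≤ δ' := div_nonneg (by linarith) hN'.le
    nlinarith [hbu'.1, hbv'.2]
  have hi1N : i + 1 ≤ N := by omega
  set lo : ℝ := ((i:ℝ) * δ' + β - b) / r with hlo
  set hi_ : ℝ := (((i:ℝ)+1) * δ' - b) / r with hhi
  have hlo0 : 0 ≤ lo := by
    apply div_nonneg _ hr0.le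
    linarith [hbu'.2]
  have hhi1 : hi_ ≤ 1 := by
    rw [hhi, div_le_one hr0]
    have : ((i:ℝ)+1) * δ' ≤ (i':ℝ) * δ' := by
      have : ((i:ℝ)+1) ≤ (i':ℝ) := by exact_mod_cast hii'
      nlinarith [le_of_lt hδ, hβ0.le]
    linarith [hbv'.1]
  have hlen : hi_ - lo = (δ' - β) / r := by
    rw [hhi, hlo, div_sub_div_same]
    congr 1
    ring
  have hlen' : δ' - β < hi_ - lo := by
    rw [hlen, lt_div_iff₀ hr0]
    nlinarith [mul_pos hδ (sub_pos.2 hr1)]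
  set ε : ℝ := (hi_ - lo - (δ' - β)) / 2 with hε
  have hε0 : 0 < ε := by rw [hε]; linarith
  set x0 : ℝ := hi_ - ε with hx0def
  have hx0lo : x0 - lo = (δ' - β) + ε := by rw [hx0def, hε]; ring
  have hx00 : 0 ≤ x0 := by
    have : lo ≤ x0 := by rw [hx0def, hε]; linarith
    linarith
  have hx01 : x0 ≤ 1 := by
    rw [hx0def]; linarith
  obtain ⟨k, hk⟩ := exists_pow_lt_of_lt_one (show (0:ℝ) < (δ' - β) + ε by linarith) hβ1'
  obtain ⟨γ, hγΓ, hγle, hγd⟩ := dense_below hN hβ0 hβ1 k x0 hx00 hx01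
  have hγlo : lo < γ := by
    have hmax : max ((1-β)/N - β) (β ^ k) < (δ' - β) + ε := by
      apply max_lt _ hk
      rw [← hδ'def]
      linarith
    have : x0 - γ < (δ' - β) + ε := lt_of_le_of_lt hγd hmax
    linarith [hx0lo]
  have himg := h γ hγΓ
  have hrγb : (i:ℝ) * δ' + β < r * γ + b := by
    have : (i:ℝ) * δ' + β - b < r * γ := by
      rw [hlo] at hγlo
      calc (i:ℝ) * δ' + β - b = r * lo := by rw [hlo, mul_div_cancel₀ _ hr0.ne']
        _ < r * γ := by exact mul_lt_mul_of_pos_left hγlo hr0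
    linarith
  have hrγb2 : r * γ + b < ((i:ℝ)+1) * δ' := by
    have hγhi : γ < hi_ := by
      calc γ ≤ x0 := hγle
        _ < hi_ := by rw [hx0def]; linarith
    have : r * γ < ((i:ℝ)+1) * δ' - b := by
      calc r * γ < r * hi_ := mul_lt_mul_of_pos_left hγhi hr0
        _ = ((i:ℝ)+1) * δ' - b := by rw [hhi, mul_div_cancel₀ _ hr0.ne']
    linarith
  rcases gap_empty hN hβ0 hβ1' hi himg with hcase | hcase
  · rw [← hδ'def] at hcase
    linarith
  · rw [← hδ'def] at hcase
    linarith


lemma phiWord_cons (a : ℕ) (w : List ℕ) (x : ℝ) :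
    phiWord N β (a :: w) x = phi N β a (phiWord N β w x) := rfl

lemma phiWord_apply (w : List ℕ) (x : ℝ) :
    phiWord N β w x = β ^ w.length * x + phiWord N β w 0 := by
  induction w with
  | nil => simp [phiWord]
  | cons a w ih =>
    rw [phiWord_cons, phiWord_cons, phi, phi, ih]
    simp only [List.length_cons]
    ring

lemma phiWord_zero_sum (w : List ℕ) :
    phiWord N β w 0 = (1 - β) / N *
      ∑ q ∈ Finset.range w.length, (w.getD q 0 : ℝ) * β ^ q := by
  induction w with
  | nil => simp [phiWord]
  | cons a w ih =>
    rw [phiWord_cons, phi, ih]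
    simp only [List.length_cons]
    have hsum : ∑ q ∈ Finset.range (w.length+1), (((a :: w).getD q 0 : ℕ) : ℝ) * β ^ q
        = (a:ℝ) + β * ∑ q ∈ Finset.range w.length, ((w.getD q 0 : ℕ) : ℝ) * β ^ q := by
      rw [Finset.sum_range_succ' (fun q => (((a :: w).getD q 0 : ℕ) : ℝ) * β ^ q) w.length,
        Finset.mul_sum]
      simp only [List.getD_cons_succ, List.getD_cons_zero, pow_zero, mul_one]
      rw [add_comm]
      congr 1
      apply Finset.sum_congr rfl
      intro q _
      ring
    rw [hsum, mul_add]
    ring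

/-- Step 1: any affine contraction of Γ into Γ is a word map. -/
lemma step1 (hN : 0 < N) (hβ0 : 0 < β) (hβ1 : β < 1 / (2 * N + 1)) :
    ∀ n : ℕ, ∀ r b : ℝ, 0 < r → r ≤ 1 → β ^ n ≤ r →
    (∀ x ∈ Gamma N β, r * x + b ∈ Gamma N β) →
    ∃ w : List ℕ, (∀ a ∈ w, a ≤ N) ∧ ∀ x : ℝ, r * x + b = phiWord N β w x := by
  have hβ1' := beta_lt_one hN hβ0 hβ1
  have hN' : (0:ℝ) < N := by exact_mod_cast hN
  intro n
  induction n with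
  | zero =>
    intro r b hr0 hr1 hrn h
    have hr : r = 1 := le_antisymm hr1 (by simpa using hrn)
    have hb0 : b ∈ Gamma N β := by simpa using h 0 zero_mem_Gamma
    have hb1 : r * 1 + b ∈ Gamma N β := h 1 (one_mem_Gamma hN hβ0 hβ1')
    have h1 := (Gamma_subset hN hβ0 hβ1' hb0).1
    have h2 := (Gamma_subset hN hβ0 hβ1' hb1).2
    rw [hr] at h2
    have hb : b = 0 := by linarith
    exact ⟨[], by simp, fun x => by rw [hr, hb]; simp [phiWord]⟩
  | succ n ih =>
    intro r b hr0 hr1 hrn h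
    rcases eq_or_lt_of_le hr1 with hr | hr
    · -- r = 1
      have hb0 : b ∈ Gamma N β := by simpa using h 0 zero_mem_Gamma
      have hb1 : r * 1 + b ∈ Gamma N β := h 1 (one_mem_Gamma hN hβ0 hβ1')
      have h1 := (Gamma_subset hN hβ0 hβ1' hb0).1
      have h2 := (Gamma_subset hN hβ0 hβ1' hb1).2
      rw [hr] at h2
      have hb : b = 0 := by linarith
      exact ⟨[], by simp, fun x => by rw [hr, hb]; simp [phiWord]⟩
    · -- r < 1, so r ≤ β
      have hrβ : r ≤ β := by
        by_contra hcon
        push_neg at hcon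
        exact no_mid hN hβ0 hβ1 hcon hr h
      have hb0 : b ∈ Gamma N β := by simpa using h 0 zero_mem_Gamma
      obtain ⟨i, hi, u, hu, hbu⟩ := Gamma_decomp hβ0 hβ1' hb0
      obtain ⟨hu0, hu1⟩ := Gamma_subset hN hβ0 hβ1' hu
      have hδ2 := two_beta_lt hN hβ0 hβ1
      have hbl : (i:ℝ) * ((1-β)/N) ≤ b ∧ b ≤ (i:ℝ) * ((1-β)/N) + β := by
        rw [hbu, phi, mul_div_assoc]
        constructor <;> nlinarith
      -- every image lands in cylinder i
      have hland : ∀ x ∈ Gamma N β,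
          (r / β) * x + (b - (i:ℝ) * ((1-β)/N)) / β ∈ Gamma N β := by
        intro x hx
        have hx01 := Gamma_subset hN hβ0 hβ1' hx
        have himg := h x hx
        obtain ⟨j, hj, y, hy, hjy⟩ := Gamma_decomp hβ0 hβ1' himg
        obtain ⟨hy0, hy1⟩ := Gamma_subset hN hβ0 hβ1' hy
        have hjl : (j:ℝ) * ((1-β)/N) ≤ r * x + b ∧
            r * x + b ≤ (j:ℝ) * ((1-β)/N) + β := by
          rw [hjy, phi, mul_div_assoc]
          constructor <;> nlinarith
        have hrx : 0 ≤ r * x ∧ r * x ≤ β := by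
          constructor
          · exact mul_nonneg hr0.le hx01.1
          · nlinarith [hx01.2]
        have hij : j = i := by
          by_contra hne
          rcases lt_or_gt_of_ne hne with hlt | hgt
          · -- j < i
            have hji : (j:ℝ) + 1 ≤ (i:ℝ) := by exact_mod_cast hlt
            have hδ'0 : (0:ℝ) < (1-β)/N := by
              apply div_pos (by linarith) hN'
            have key : (j:ℝ) * ((1-β)/N) + (1-β)/N ≤ (i:ℝ) * ((1-β)/N) := by
              have := mul_le_mul_of_nonneg_right hji hδ'0.le
              rw [add_mul, one_mul] at this
              exact this
            linarith [hjl.2, hbl.1, hrx.1]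
          · -- j > i
            have hji : (i:ℝ) + 1 ≤ (j:ℝ) := by exact_mod_cast hgt
            have hδ'0 : (0:ℝ) < (1-β)/N := by
              apply div_pos (by linarith) hN'
            have key : (i:ℝ) * ((1-β)/N) + (1-β)/N ≤ (j:ℝ) * ((1-β)/N) := by
              have := mul_le_mul_of_nonneg_right hji hδ'0.le
              rw [add_mul, one_mul] at this
              exact this
            linarith [hjl.1, hbl.2, hrx.2]
        subst hij
        have : r * x + b = β * y + (j:ℝ) * ((1-β)/N) := by
          rw [hjy, phi, mul_div_assoc]
        have hyeq : (r / β) * x + (b - (j:ℝ) * ((1-β)/N)) / β = y := by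
          rw [div_mul_eq_mul_div, ← add_div, eq_comm, eq_div_iff hβ0.ne']
          linear_combination -this
        rw [hyeq]
        exact hy
      have hr0' : 0 < r / β := div_pos hr0 hβ0
      have hr1' : r / β ≤ 1 := by
        rw [div_le_one hβ0]
        exact hrβ
      have hrn' : β ^ n ≤ r / β := by
        rw [le_div_iff₀ hβ0]
        calc β ^ n * β = β ^ (n+1) := by ring
          _ ≤ r := hrn
      obtain ⟨w', hw', heq'⟩ := ih (r / β) _ hr0' hr1' hrn' hland
      refine ⟨i :: w', ?_, ?_⟩
      · intro a ha
        rcases List.mem_cons.1 ha with rfl | ha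
        · exact hi
        · exact hw' a ha
      · intro x
        rw [phiWord_cons, ← heq' x, phi, mul_div_assoc]
        field_simp
        ring


lemma getD_le {w : List ℕ} (hw : ∀ a ∈ w, a ≤ N) (q : ℕ) : w.getD q 0 ≤ N := by
  induction w generalizing q with
  | nil => simp
  | cons a w ih =>
    cases q with
    | zero => exact hw a List.mem_cons_self
    | succ q => exact ih (fun x hx => hw x (List.mem_cons_of_mem a hx)) q

lemma summable_int_digits (hβ0 : 0 < β) (hβ1' : β < 1) (E : ℕ → ℤ) (C : ℕ)
    (hE : ∀ q, |E q| ≤ (C:ℤ)) : Summable (fun q : ℕ => (E q : ℝ) * β ^ q) := by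
  apply summable_digits hβ0 hβ1' _ (C:ℝ)
  intro q
  exact_mod_cast hE q

/-- If `y ∈ Γ` has any expansion with digits in `[0, 2N]`, those digits are `≤ N`
(indeed they agree with a coding of `y`). -/
lemma coding_bound (hN : 0 < N) (hβ0 : 0 < β) (hβ1 : β < 1 / (2 * N + 1)) {y : ℝ}
    (hy : y ∈ Gamma N β) (E : ℕ → ℤ) (hE : ∀ q, 0 ≤ E q ∧ E q ≤ 2 * N)
    (heq : y = (1 - β) / N * ∑' q : ℕ, (E q : ℝ) * β ^ q) :
    ∀ q, E q ≤ N := by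
  have hβ1' := beta_lt_one hN hβ0 hβ1
  have hN' : (0:ℝ) < N := by exact_mod_cast hN
  obtain ⟨c, hc, hceq⟩ := hy
  have hδ'ne : ((1 - β) / N : ℝ) ≠ 0 := by
    apply div_ne_zero (by linarith) hN'.ne'
  have hsumeq : ∑' q : ℕ, (c q : ℝ) * β ^ q = ∑' q : ℕ, (E q : ℝ) * β ^ q :=
    mul_left_cancel₀ hδ'ne (hceq ▸ heq)
  have hsc : Summable (fun q : ℕ => (c q : ℝ) * β ^ q) :=
    summable_coding hβ0 hβ1' c hc
  have hsE : Summable (fun q : ℕ => (E q : ℝ) * β ^ q) := by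
    apply summable_int_digits hβ0 hβ1' E (2*N)
    intro q
    obtain ⟨h1, h2⟩ := hE q
    rw [abs_of_nonneg h1]
    exact_mod_cast h2
  have hzero : ∑' q : ℕ, ((c q - E q : ℤ) : ℝ) * β ^ q = 0 := by
    have : ∀ q : ℕ, ((c q - E q : ℤ) : ℝ) * β ^ q
        = (c q : ℝ) * β ^ q - (E q : ℝ) * β ^ q := by
      intro q; push_cast; ring
    rw [tsum_congr this, Summable.tsum_sub hsc hsE, hsumeq, sub_self]
  have hbd : ∀ q, |c q - E q| ≤ 2 * (N:ℤ) := by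
    intro q
    obtain ⟨h1, h2⟩ := hc q
    obtain ⟨h3, h4⟩ := hE q
    rw [abs_le]
    omega
  intro q
  have h5 : c q - E q = 0 := by
    simpa using expansion_unique hN hβ0 hβ1 q (fun q => c q - E q) hbd hzero
  have := (hc q).2
  omega

/-- If `y ∈ Γ` but `β^s y` has an expansion with digits in `[0,2N]` whose constant
digit is positive while `s ≥ 1`, contradiction. -/
lemma coding_shift_absurd (hN : 0 < N) (hβ0 : 0 < β) (hβ1 : β < 1 / (2 * N + 1))
    {y : ℝ} (hy : y ∈ Gamma N β) (E : ℕ → ℤ) (s : ℕ) (hs : 1 ≤ s)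
    (hE : ∀ q, 0 ≤ E q ∧ E q ≤ 2 * N) (hE0 : 1 ≤ E 0)
    (heq : β ^ s * y = (1 - β) / N * ∑' q : ℕ, (E q : ℝ) * β ^ q) : False := by
  have hβ1' := beta_lt_one hN hβ0 hβ1
  have hN' : (0:ℝ) < N := by exact_mod_cast hN
  obtain ⟨c, hc, hceq⟩ := hy
  have hδ'ne : ((1 - β) / N : ℝ) ≠ 0 := by
    apply div_ne_zero (by linarith) hN'.ne'
  set C : ℕ → ℤ := fun q => if s ≤ q then c (q - s) else 0 with hC
  have hsc : Summable (fun q : ℕ => (c q : ℝ) * β ^ q) :=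
    summable_coding hβ0 hβ1' c hc
  have hCbd : ∀ q, |C q| ≤ (N:ℤ) := by
    intro q
    simp only [hC]
    split_ifs with hq
    · obtain ⟨h1, h2⟩ := hc (q - s)
      rw [abs_of_nonneg h1]; exact h2
    · simp
  have hsC : Summable (fun q : ℕ => (C q : ℝ) * β ^ q) :=
    summable_int_digits hβ0 hβ1' C N hCbd
  have hCsum : ∑' q : ℕ, (C q : ℝ) * β ^ q = β ^ s * ∑' q : ℕ, (c q : ℝ) * β ^ q := by
    rw [tsum_shift s hsC (fun q hq => by
      simp only [hC, if_neg (by omega : ¬ s ≤ q)]; norm_num)]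
    have : ∀ q : ℕ, (C (q + s) : ℝ) * β ^ (q + s) = β ^ s * ((c q : ℝ) * β ^ q) := by
      intro q
      simp only [hC, if_pos (by omega : s ≤ q + s), Nat.add_sub_cancel]
      rw [pow_add]
      ring
    rw [tsum_congr this, tsum_mul_left]
  have hsE : Summable (fun q : ℕ => (E q : ℝ) * β ^ q) := by
    apply summable_int_digits hβ0 hβ1' E (2*N)
    intro q
    obtain ⟨h1, h2⟩ := hE q
    rw [abs_of_nonneg h1]
    exact_mod_cast h2
  have hsumeq : ∑' q : ℕ, (C q : ℝ) * β ^ q = ∑' q : ℕ, (E q : ℝ) * β ^ q := by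
    rw [hCsum]
    apply mul_left_cancel₀ hδ'ne
    rw [← mul_assoc, mul_comm ((1-β)/(N:ℝ)) (β ^ s), mul_assoc, ← hceq, heq]
  have hzero : ∑' q : ℕ, ((C q - E q : ℤ) : ℝ) * β ^ q = 0 := by
    have : ∀ q : ℕ, ((C q - E q : ℤ) : ℝ) * β ^ q
        = (C q : ℝ) * β ^ q - (E q : ℝ) * β ^ q := by
      intro q; push_cast; ring
    rw [tsum_congr this, Summable.tsum_sub hsC hsE, hsumeq, sub_self]
  have hbd : ∀ q, |C q - E q| ≤ 2 * (N:ℤ) := by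
    intro q
    have h1 := hCbd q
    have h0 : 0 ≤ C q := by
      simp only [hC]
      split_ifs with hq
      · exact (hc (q - s)).1
      · exact le_refl 0
    obtain ⟨h3, h4⟩ := hE q
    rw [abs_le] at h1 ⊢
    omega
  have h5 : C 0 - E 0 = 0 := by
    simpa using expansion_unique hN hβ0 hβ1 0 (fun q => C q - E q) hbd hzero
  have hC0 : C 0 = 0 := by simp only [hC, if_neg (by omega : ¬ s ≤ 0)]
  omega


/-- Reindex a digit sum `q ↦ ν - q`. -/
lemma reindex_sum (β : ℝ) (g : ℕ → ℕ) (τ ν : ℕ) (hτν : τ ≤ ν) :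
    ∑ q ∈ Finset.range ν,
        (if q < ν ∧ ν - q ≤ τ then ((g (ν - q) : ℕ) : ℝ) else 0) * β ^ q
      = ∑ k ∈ Finset.Icc 1 τ, ((g k : ℕ) : ℝ) * β ^ (ν - k) := by
  have h1 : ∀ q ∈ Finset.range ν,
      (if q < ν ∧ ν - q ≤ τ then ((g (ν - q) : ℕ) : ℝ) else 0) * β ^ q
        = if ν - q ≤ τ then ((g (ν - q) : ℕ) : ℝ) * β ^ q else 0 := by
    intro q hq
    have hqν := Finset.mem_range.1 hq
    by_cases h2 : ν - q ≤ τ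
    · rw [if_pos ⟨hqν, h2⟩, if_pos h2]
    · rw [if_neg (fun hc => h2 hc.2), if_neg h2, zero_mul]
  rw [Finset.sum_congr rfl h1, ← Finset.sum_filter]
  apply Finset.sum_nbij' (i := fun q => ν - q) (j := fun k => ν - k)
  · intro a ha
    obtain ⟨ha1, ha2⟩ := Finset.mem_filter.1 ha
    have := Finset.mem_range.1 ha1
    rw [Finset.mem_Icc]
    omega
  · intro a ha
    obtain ⟨ha1, ha2⟩ := Finset.mem_Icc.1 ha
    rw [Finset.mem_filter, Finset.mem_range]
    omega
  · intro a ha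
    obtain ⟨ha1, _⟩ := Finset.mem_filter.1 ha
    have := Finset.mem_range.1 ha1
    omega
  · intro a ha
    obtain ⟨ha1, ha2⟩ := Finset.mem_Icc.1 ha
    omega
  · intro a ha
    obtain ⟨ha1, _⟩ := Finset.mem_filter.1 ha
    have := Finset.mem_range.1 ha1
    congr 2
    omega

end Aux

/-- Suppose `0 < β < 1/(2N+1)`, `t = (t_0,…,t_m) ∈ T^{m+1}` with `0 = t_0 < ⋯ < t_m`
(with minimal digit representation `d` of length `τ = τ_t`), and `g(x) = r x + b` with
`0 < r < 1`. If `g(Γ_t) ⊆ Γ`, then `g = φ_i` for some word `i ∈ Ω_t^n` with `n ≥ τ_t`. -/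
theorem stmt12 (N : ℕ) (hN : 0 < N) (β : ℝ) (hβ0 : 0 < β) (hβ1 : β < 1 / (2 * N + 1))
    (m : ℕ) (t : Fin (m + 1) → ℝ) (ht0 : t 0 = 0) (hmono : StrictMono t)
    (hT : ∀ j, t j ∈ Tset N β) (τ : ℕ) (d : Fin (m + 1) → ℕ → ℕ)
    (hd : IsMinimalRep N β t τ d)
    (r b : ℝ) (hr0 : 0 < r) (hr1 : r < 1)
    (h : ∀ x ∈ GammaT N β t, r * x + b ∈ Gamma N β) :
    ∃ n, τ ≤ n ∧ ∃ w ∈ Omega N τ (digitSup d) n, ∀ x : ℝ, r * x + b = phiWord N β w x := by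
  classical
  have hβ1' := beta_lt_one hN hβ0 hβ1
  have hN' : (0:ℝ) < N := by exact_mod_cast hN
  obtain ⟨⟨hdig, hrep⟩, hmin⟩ := hd
  have hG : ∀ x ∈ Gamma N β, r * x + b ∈ Gamma N β := by
    intro x hx
    apply h
    refine Set.mem_iUnion.2 ⟨0, ⟨x, hx, ?_⟩⟩
    simp [ht0]
  obtain ⟨n0, hn0⟩ := exists_pow_lt_of_lt_one hr0 hβ1'
  obtain ⟨w, hw, heq⟩ := step1 hN hβ0 hβ1 n0 r b hr0 hr1.le hn0.le hG
  have hbeq : b = phiWord N β w 0 := by simpa using heq 0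
  have hreq : r = β ^ w.length := by
    have h1 := heq 1
    rw [phiWord_apply] at h1
    rw [mul_one, mul_one] at h1
    linarith [hbeq]
  have hyΓ : ∀ j, phiWord N β w 0 + β ^ w.length * t j ∈ Gamma N β := by
    intro j
    have hmem : (0:ℝ) + t j ∈ GammaT N β t :=
      Set.mem_iUnion.2 ⟨j, ⟨0, zero_mem_Gamma, rfl⟩⟩
    have h2 := h _ hmem
    have h3 : r * ((0:ℝ) + t j) + b = phiWord N β w 0 + β ^ w.length * t j := by
      rw [hreq, hbeq]; ring
    rwa [h3] at h2
  have hpow : ∀ ν : ℕ, ∀ j, τ ≤ ν → (β:ℝ) ^ ν * t j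
      = (1 - β) / N * ∑ k ∈ Finset.Icc 1 τ, (d j k : ℝ) * β ^ (ν - k) := by
    intro ν j hτν
    rw [hrep j, ← mul_assoc, mul_comm (β ^ ν), mul_assoc, Finset.mul_sum]
    congr 1
    apply Finset.sum_congr rfl
    intro k hk
    obtain ⟨hk1, hk2⟩ := Finset.mem_Icc.1 hk
    have hz : (β:ℝ) ^ ν * β ^ (-(k:ℤ)) = β ^ (ν - k) := by
      rw [← zpow_natCast β ν, ← zpow_add₀ hβ0.ne', ← zpow_natCast β (ν - k)]
      congr 1
      omega
    calc (β:ℝ) ^ ν * ((d j k : ℝ) * β ^ (-(k:ℤ)))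
        = (d j k : ℝ) * ((β:ℝ) ^ ν * β ^ (-(k:ℤ))) := by ring
      _ = (d j k : ℝ) * β ^ (ν - k) := by rw [hz]
  -- the finite word sum
  have hSw : Summable (fun q : ℕ => ((w.getD q 0 : ℕ) : ℝ) * β ^ q) := by
    apply summable_digits hβ0 hβ1' _ (N:ℝ)
    intro q
    rw [abs_of_nonneg (by positivity)]
    exact_mod_cast getD_le hw q
  have hSwsum : ∑' q : ℕ, ((w.getD q 0 : ℕ) : ℝ) * β ^ q
      = ∑ q ∈ Finset.range w.length, ((w.getD q 0 : ℕ) : ℝ) * β ^ q := by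
    apply tsum_eq_sum
    intro q hq
    rw [List.getD_eq_default _ _ (by simpa using Finset.mem_range.not.1 hq)]
    norm_num
  -- Part A : τ ≤ w.length
  have hτn : τ ≤ w.length := by
    by_contra hcon
    push_neg at hcon
    have hτ1 : 1 ≤ τ := by omega
    have hjex : ∃ j0, 1 ≤ d j0 τ := by
      by_contra hall
      push_neg at hall
      refine hmin (τ - 1) (by omega) d ⟨hdig, ?_⟩
      intro j
      rw [hrep j]
      congr 1
      have hττ : τ = (τ - 1) + 1 := by omega
      rw [hττ, Finset.sum_Icc_succ_top (by omega : 1 ≤ (τ - 1) + 1)]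
      have hz : d j ((τ - 1) + 1) = 0 := by
        have h := hall j
        have he : (τ - 1) + 1 = τ := by omega
        rw [he]
        omega
      rw [hz]
      simp
    obtain ⟨j0, hj0⟩ := hjex
    set n := w.length
    set s := τ - n with hs
    have hs1 : 1 ≤ s := by omega
    set E : ℕ → ℤ := fun q =>
      (if s ≤ q then (w.getD (q - s) 0 : ℤ) else 0) +
      (if q < τ ∧ τ - q ≤ τ then (d j0 (τ - q) : ℤ) else 0) with hE
    apply coding_shift_absurd hN hβ0 hβ1 (hyΓ j0) E s hs1
    · intro q
      constructor
      · simp only [hE]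
        split_ifs <;> positivity
      · simp only [hE]
        have h1 : (w.getD (q - s) 0 : ℤ) ≤ N := by exact_mod_cast getD_le hw (q - s)
        have h2 : (d j0 (τ - q) : ℤ) ≤ N := by exact_mod_cast hdig j0 (τ - q)
        split_ifs <;> omega
    · simp only [hE, if_neg (by omega : ¬ s ≤ 0),
        if_pos (show 0 < τ ∧ τ - 0 ≤ τ from ⟨by omega, by omega⟩), zero_add]
      simpa using hj0
    · -- the expansion identity
      have hNcast : (0:ℝ) ≤ (N:ℝ) := Nat.cast_nonneg N
      have hsE1 : Summable (fun q : ℕ =>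
          (if s ≤ q then ((w.getD (q - s) 0 : ℕ) : ℝ) else 0) * β ^ q) := by
        apply summable_digits hβ0 hβ1' _ (N:ℝ)
        intro q
        split_ifs with hq
        · rw [abs_of_nonneg (by positivity)]
          exact_mod_cast getD_le hw (q - s)
        · simpa using hNcast
      have hsE2 : Summable (fun q : ℕ =>
          (if q < τ ∧ τ - q ≤ τ then ((d j0 (τ - q) : ℕ) : ℝ) else 0) * β ^ q) := by
        apply summable_digits hβ0 hβ1' _ (N:ℝ)
        intro q
        split_ifs with hq
        · rw [abs_of_nonneg (by positivity)]
          exact_mod_cast hdig j0 (τ - q)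
        · simpa using hNcast
      have hsplit : ∀ q : ℕ, (E q : ℝ) * β ^ q
          = (if s ≤ q then ((w.getD (q - s) 0 : ℕ) : ℝ) else 0) * β ^ q
            + (if q < τ ∧ τ - q ≤ τ then ((d j0 (τ - q) : ℕ) : ℝ) else 0) * β ^ q := by
        intro q
        simp only [hE]
        split_ifs <;> push_cast <;> ring
      have hF1 : ∑' q : ℕ, (if s ≤ q then ((w.getD (q - s) 0 : ℕ) : ℝ) else 0) * β ^ q
          = β ^ s * ∑ q ∈ Finset.range n, ((w.getD q 0 : ℕ) : ℝ) * β ^ q := by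
        rw [tsum_shift s hsE1 (fun q hq => by
          rw [if_neg (by omega : ¬ s ≤ q)]; norm_num)]
        have hterm : ∀ q : ℕ,
            (if s ≤ q + s then ((w.getD (q + s - s) 0 : ℕ) : ℝ) else 0) * β ^ (q + s)
            = β ^ s * (((w.getD q 0 : ℕ) : ℝ) * β ^ q) := by
          intro q
          rw [if_pos (by omega : s ≤ q + s), Nat.add_sub_cancel, pow_add]
          ring
        rw [tsum_congr hterm, tsum_mul_left, hSwsum]
      have hF2 : ∑' q : ℕ,
          (if q < τ ∧ τ - q ≤ τ then ((d j0 (τ - q) : ℕ) : ℝ) else 0) * β ^ q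
          = ∑ k ∈ Finset.Icc 1 τ, ((d j0 k : ℕ) : ℝ) * β ^ (τ - k) := by
        rw [tsum_eq_sum (s := Finset.range τ) (fun q hq => by
          rw [if_neg (by
            have : τ ≤ q := by simpa using Finset.mem_range.not.1 hq
            omega : ¬ (q < τ ∧ τ - q ≤ τ))]
          norm_num)]
        exact reindex_sum β (d j0) τ τ le_rfl
      rw [tsum_congr hsplit, Summable.tsum_add hsE1 hsE2, hF1, hF2, phiWord_zero_sum]
      have hpows : β ^ s * β ^ n = β ^ τ := by
        rw [← pow_add]
        congr 1
        omega
      have hτt := hpow τ j0 le_rfl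
      have h2 : β ^ s * (β ^ n * t j0)
          = (1 - β) / N * ∑ k ∈ Finset.Icc 1 τ, ((d j0 k : ℕ) : ℝ) * β ^ (τ - k) := by
        rw [← mul_assoc, hpows, hτt]
      linear_combination h2
  -- Part B : digit bounds
  have hB : ∀ k, 1 ≤ k → k ≤ τ → ∀ j, w.getD (w.length - k) 0 + d j k ≤ N := by
    intro k hk1 hk2 j
    set n := w.length
    set A : ℕ → ℤ := fun q => (w.getD q 0 : ℤ) +
      (if q < n ∧ n - q ≤ τ then (d j (n - q) : ℤ) else 0) with hA
    have hbound : ∀ q, A q ≤ N := by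
      apply coding_bound hN hβ0 hβ1 (hyΓ j) A
      · intro q
        constructor
        · simp only [hA]
          split_ifs <;> positivity
        · simp only [hA]
          have h1 : (w.getD q 0 : ℤ) ≤ N := by exact_mod_cast getD_le hw q
          have h2 : (d j (n - q) : ℤ) ≤ N := by exact_mod_cast hdig j (n - q)
          split_ifs <;> omega
      · -- the expansion identity
        have hsA : Summable (fun q : ℕ => (A q : ℝ) * β ^ q) := by
          apply summable_int_digits hβ0 hβ1' A (2*N)
          intro q
          simp only [hA]
          have h1 : (w.getD q 0 : ℤ) ≤ N := by exact_mod_cast getD_le hw q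
          have h2 : (d j (n - q) : ℤ) ≤ N := by exact_mod_cast hdig j (n - q)
          rw [abs_le]
          constructor <;> (split_ifs <;> push_cast <;> omega)
        have hAsum : ∑' q : ℕ, (A q : ℝ) * β ^ q
            = ∑ q ∈ Finset.range n, (A q : ℝ) * β ^ q := by
          apply tsum_eq_sum
          intro q hq
          have hnq : n ≤ q := by simpa using Finset.mem_range.not.1 hq
          simp only [hA, if_neg (show ¬ (q < n ∧ n - q ≤ τ) by omega),
            List.getD_eq_default _ _ hnq]
          norm_num
        have hsplit : ∀ q : ℕ, (A q : ℝ) * β ^ q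
            = ((w.getD q 0 : ℕ) : ℝ) * β ^ q +
              (if q < n ∧ n - q ≤ τ then ((d j (n - q) : ℕ) : ℝ) else 0) * β ^ q := by
          intro q
          simp only [hA]
          split_ifs <;> push_cast <;> ring
        have hfin : ∑ q ∈ Finset.range n, (A q : ℝ) * β ^ q
            = ∑ q ∈ Finset.range n, ((w.getD q 0 : ℕ) : ℝ) * β ^ q
              + ∑ k' ∈ Finset.Icc 1 τ, ((d j k' : ℕ) : ℝ) * β ^ (n - k') := by
          rw [Finset.sum_congr rfl (fun q _ => hsplit q), Finset.sum_add_distrib,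
            reindex_sum β (d j) τ n hτn]
        rw [hAsum, hfin, mul_add, ← phiWord_zero_sum, ← hpow n j hτn]
    have := hbound (n - k)
    simp only [hA, if_pos (show n - k < n ∧ n - (n - k) ≤ τ by omega)] at this
    have hnk : n - (n - k) = k := by omega
    rw [hnk] at this
    exact_mod_cast this
  refine ⟨w.length, hτn, w, ⟨⟨rfl, hw⟩, ?_⟩, heq⟩
  intro k hk1 hk2
  have hall := hB k hk1 hk2
  have hsup : digitSup d k ≤ N - w.getD (w.length - k) 0 := by
    apply Finset.sup_le
    intro j _
    have := hall j
    omega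
  have h0 := hall 0
  omega


end HSCantor
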